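/- Let f and g be formal power series over a commutative ring R. Then for every m ∈ ℕ, the coefficient of x^m in f·g equals Σ_{j=0}^{m} Σ_{k=0}^{m−j} T_{m−j,k} · σ_k · δ_j[k] · f_j*[k] · g_j*[k], where T_{n,k} = 1 if (n−k) AND k = 0 and T_{n,k} = 0 otherwise, δ_j[k] = 1 if j AND k = 0 and 0 otherwise, and f_j* denotes the inverse binomial modulo 2 transform of the shifted series f_j. -/

import Mathlib

/-!
Write `i ⊆ k` when every binary digit of `i` is a digit of `k` (`i &&& k = i`). For `i ⊆ k`
one has `k - i = k ^^^ i`, so `σ (k - i) = σ k * σ i` and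
`f_j*[k] = σ k * ∑_{i ⊆ k} σ i * f[j + i]`. The two indicator factors say that `k ⊆ T_j`,
where `T_j = (m - j).ldiff j` consists of the digits of `m - j` not in `j`. Expanding the
product and summing `σ k` over the Boolean interval `i ||| l ⊆ k ⊆ T_j`, which cancels unless
it is a single point (toggle a digit of `T_j` outside `i ||| l`), turns the `j`-th summand into
`σ T_j * ∑_{i ||| l = T_j} σ i * σ l * f[j + i] * g[j + l]`. With `a = j + i` and `b = j + l`,
the triples `(a, b, j)` that occur are those with `j ⊆ a &&& b`, `a ||| b ≤ m` and
`m - (a ||| b) ⊆ j`, each with sign `σ (a ||| b) * σ a * σ b * σ j`. Summing over `j` is again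
an interval sum, which survives only when `m - (a ||| b) = a &&& b`, that is `a + b = m`, and
then the sign is `1`.
-/

/-- The signed Thue–Morse sequence: `σ n = (-1)^(Hamming weight of n)`. -/
noncomputable def sgn (R : Type*) [CommRing R] (n : ℕ) : R := (-1) ^ (Nat.digits 2 n).sum

/-- `f_k`: the power series `f` shifted by `k`, i.e. `Σ_{n≥0} f[k+n] x^n`. -/
noncomputable def shiftS {R : Type*} [CommRing R] (k : ℕ) (f : PowerSeries R) : PowerSeries R :=
  PowerSeries.mk fun n => PowerSeries.coeff (k + n) f

/-- The inverse binomial modulo 2 transform: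
`f*[n] = Σ_{0≤k≤n, (n-k) AND k = 0} σ_{n-k}·f[k]`. -/
noncomputable def bmtInv {R : Type*} [CommRing R] (f : PowerSeries R) : PowerSeries R :=
  PowerSeries.mk fun n => ∑ k ∈ Finset.range (n + 1),
    if (n - k) &&& k = 0 then sgn R (n - k) * PowerSeries.coeff k f else 0

open Finset PowerSeries

namespace Nat

theorem le_of_and_eq {a b : ℕ} (h : a &&& b = a) : a ≤ b :=
  h ▸ Nat.and_le_right

theorem add_eq_xor_add_two_mul_and (a b : ℕ) : a + b = (a ^^^ b) + 2 * (a &&& b) := by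
  induction a using Nat.strong_induction_on generalizing b with
  | _ a ih =>
    rcases eq_or_ne a 0 with rfl | ha
    · simp
    · have h := ih (a / 2) (Nat.div_lt_self (Nat.pos_of_ne_zero ha) one_lt_two) (b / 2)
      rw [← Nat.xor_div_two, ← Nat.and_div_two] at h
      have hxor : (a ^^^ b) % 2 = (a + b) % 2 := Nat.xor_mod_two_eq
      have hand : (a &&& b) % 2 = 1 ↔ a % 2 = 1 ∧ b % 2 = 1 := Nat.and_mod_two_eq_one
      omega

theorem add_eq_or_of_and_eq_zero {a b : ℕ} (h : a &&& b = 0) : a + b = a ||| b := by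
  have hxor : a ^^^ b = a ||| b := by
    simp only [Nat.eq_iff_testBit_eq, Nat.testBit_and, Nat.testBit_xor, Nat.testBit_or,
      Nat.zero_testBit] at *
    grind
  rw [add_eq_xor_add_two_mul_and, h, mul_zero, add_zero, hxor]

theorem add_eq_or_add_and (a b : ℕ) : a + b = (a ||| b) + (a &&& b) := by
  have hdisj : (a ^^^ b) &&& (a &&& b) = 0 := by
    simp only [Nat.eq_iff_testBit_eq, Nat.testBit_and, Nat.testBit_xor, Nat.zero_testBit]
    grind
  have hor : (a ^^^ b) ||| (a &&& b) = a ||| b := by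
    simp only [Nat.eq_iff_testBit_eq, Nat.testBit_and, Nat.testBit_xor, Nat.testBit_or]
    grind
  rw [← hor, ← add_eq_or_of_and_eq_zero hdisj, add_eq_xor_add_two_mul_and]
  omega

theorem sub_eq_xor_of_and_eq {a j : ℕ} (h : j &&& a = j) : a - j = a ^^^ j := by
  have hdisj : (a ^^^ j) &&& j = 0 := by
    simp only [Nat.eq_iff_testBit_eq, Nat.testBit_and, Nat.testBit_xor, Nat.zero_testBit] at *
    grind
  have hor : (a ^^^ j) ||| j = a := by
    simp only [Nat.eq_iff_testBit_eq, Nat.testBit_and, Nat.testBit_xor, Nat.testBit_or] at *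
    grind
  have := add_eq_or_of_and_eq_zero hdisj
  omega

theorem sub_and_eq_zero_iff {k n : ℕ} (hk : k ≤ n) : (n - k) &&& k = 0 ↔ k &&& n = k := by
  constructor
  · intro h
    have hn := add_eq_or_of_and_eq_zero h
    rw [Nat.sub_add_cancel hk] at hn
    rw [hn]
    simp only [Nat.eq_iff_testBit_eq, Nat.testBit_and, Nat.testBit_or]
    grind
  · intro h
    rw [sub_eq_xor_of_and_eq h]
    simp only [Nat.eq_iff_testBit_eq, Nat.testBit_and, Nat.testBit_xor, Nat.zero_testBit] at *
    grind

end Nat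

def submasks (n : ℕ) : Finset ℕ := (range (n + 1)).filter fun i => i &&& n = i

@[simp]

theorem mem_submasks {i n : ℕ} : i ∈ submasks n ↔ i &&& n = i := by
  simp only [submasks, mem_filter, mem_range, and_iff_right_iff_imp]
  exact fun h => Nat.lt_succ_of_le (Nat.le_of_and_eq h)

theorem submasks_eq_filter_submasks {k n : ℕ} (h : k &&& n = k) :
    submasks k = (submasks n).filter fun i => i &&& k = i := by
  ext i
  simp only [mem_submasks, mem_filter, Nat.eq_iff_testBit_eq, Nat.testBit_and] at *
  grind

theorem submasks_eq_filter_range {n N : ℕ} (hn : n ≤ N) :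
    submasks n = (range (N + 1)).filter fun i => i &&& n = i := by
  ext i
  simp only [mem_submasks, mem_filter, mem_range, iff_and_self]
  exact fun h => Nat.lt_succ_of_le ((Nat.le_of_and_eq h).trans hn)

theorem sum_submasks_eq_sum_range_sub {M : Type*} [AddCommMonoid M] {T j m : ℕ} (hjm : j ≤ m)
    (hT : T ≤ m - j) (φ : ℕ → M) (hφ : ∀ i, i &&& T ≠ i → φ i = 0) :
    ∑ i ∈ submasks T, φ i = ∑ a ∈ range (m + 1), if j ≤ a then φ (a - j) else 0 := by
  have hIco : (range (m + 1)).filter (j ≤ ·) = Ico j (m + 1) := by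
    ext a
    simp only [mem_filter, mem_range, mem_Ico]
    omega
  have hφ' : ∑ i ∈ submasks T, φ i = ∑ i ∈ range (m - j + 1), φ i := by
    rw [submasks_eq_filter_range hT, sum_filter]
    exact sum_congr rfl fun i _ => ite_eq_left_iff.mpr fun h => (hφ i h).symm
  rw [hφ', ← sum_filter, hIco, sum_Ico_eq_sum_range,
    show m + 1 - j = m - j + 1 by omega]
  simp only [Nat.add_sub_cancel_left]

section

variable {R : Type*} [CommRing R]

@[simp]

theorem sgn_zero : sgn R 0 = 1 := by simp [sgn]

theorem sgn_eq_neg_one_pow_mul (n : ℕ) : sgn R n = (-1) ^ n * sgn R (n / 2) := by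
  rcases eq_or_ne n 0 with rfl | hn
  · simp
  · rw [sgn, sgn, Nat.digits_def' one_lt_two (Nat.pos_of_ne_zero hn), List.sum_cons, pow_add,
      ← neg_one_pow_eq_pow_mod_two]

theorem sgn_xor (a b : ℕ) : sgn R (a ^^^ b) = sgn R a * sgn R b := by
  induction a using Nat.strong_induction_on generalizing b with
  | _ a ih =>
    rcases eq_or_ne a 0 with rfl | ha
    · simp
    · rw [sgn_eq_neg_one_pow_mul (a ^^^ b), Nat.xor_div_two,
        ih _ (Nat.div_lt_self (Nat.pos_of_ne_zero ha) one_lt_two), sgn_eq_neg_one_pow_mul a,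
        sgn_eq_neg_one_pow_mul b, neg_one_pow_eq_pow_mod_two, Nat.xor_mod_two_eq,
        ← neg_one_pow_eq_pow_mod_two, pow_add]
      ring

theorem sgn_mul_self (n : ℕ) : sgn R n * sgn R n = 1 := by
  rw [← sgn_xor, Nat.xor_self, sgn_zero]

theorem sgn_two_pow (p : ℕ) : sgn R (2 ^ p) = -1 := by
  rw [sgn, ← mul_one (2 ^ p), Nat.digits_base_pow_mul one_lt_two one_pos]
  simp

theorem sgn_sub_of_and_eq {i k : ℕ} (h : i &&& k = i) : sgn R (k - i) = sgn R k * sgn R i := by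
  rw [Nat.sub_eq_xor_of_and_eq h, sgn_xor]

theorem sum_filter_submasks_sgn (S T : ℕ) :
    ∑ k ∈ submasks T with S &&& k = S, sgn R k = if S = T then sgn R T else 0 := by
  by_cases hST : S &&& T = S
  · by_cases heq : S = T
    · subst heq
      rw [if_pos rfl, sum_eq_single_of_mem S (by simp)]
      intro k hk hne
      simp only [mem_filter, mem_submasks, Nat.land_comm S k] at hk
      exact absurd (hk.1.symm.trans hk.2) hne
    · rw [if_neg heq]
      obtain ⟨p, hTp, hSp⟩ : ∃ p, T.testBit p = true ∧ S.testBit p = false := by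
        obtain ⟨p, hp⟩ := Nat.exists_testBit_ne_of_ne heq
        simp only [Nat.eq_iff_testBit_eq, Nat.testBit_and] at hST
        exact ⟨p, by grind⟩
      refine sum_involution (fun k _ => k ^^^ 2 ^ p) (fun k _ => ?_) (fun k _ _ => ?_)
        (fun k hk => ?_) (fun k _ => Nat.xor_xor_cancel_right ..)
      · rw [sgn_xor, sgn_two_pow]; ring
      · simp only [ne_eq, Nat.eq_iff_testBit_eq, Nat.testBit_xor, Nat.testBit_two_pow, not_forall]
        exact ⟨p, by simp⟩
      · simp only [mem_filter, mem_submasks, Nat.eq_iff_testBit_eq, Nat.testBit_and,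
          Nat.testBit_xor, Nat.testBit_two_pow] at hk ⊢
        grind
  · rw [if_neg (fun h : S = T => hST (h ▸ Nat.and_self S))]
    refine sum_eq_zero fun k hk => absurd ?_ hST
    simp only [mem_filter, mem_submasks, Nat.eq_iff_testBit_eq, Nat.testBit_and] at hk ⊢
    grind

theorem sum_submasks_sgn_mul_mul (F G : ℕ → R) (T : ℕ) :
    ∑ k ∈ submasks T, sgn R k *
        ((∑ i ∈ submasks k, sgn R i * F i) * ∑ l ∈ submasks k, sgn R l * G l) =
      sgn R T * ∑ i ∈ submasks T, ∑ l ∈ submasks T,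
        if i ||| l = T then sgn R i * F i * (sgn R l * G l) else 0 := by
  calc _ = ∑ k ∈ submasks T, ∑ i ∈ submasks T, ∑ l ∈ submasks T,
        if (i ||| l) &&& k = i ||| l then sgn R k * (sgn R i * F i * (sgn R l * G l)) else 0 := by
        refine sum_congr rfl fun k hk => ?_
        rw [submasks_eq_filter_submasks (mem_submasks.mp hk), sum_filter, sum_filter,
          sum_mul_sum, mul_sum]
        refine sum_congr rfl fun i _ => ?_
        rw [mul_sum]
        refine sum_congr rfl fun l _ => ?_
        have hor : (i ||| l) &&& k = i ||| l ↔ i &&& k = i ∧ l &&& k = l := by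
          simp only [Nat.eq_iff_testBit_eq, Nat.testBit_and, Nat.testBit_or]
          grind
        simp only [hor, ite_and]
        split_ifs <;> ring
    _ = ∑ i ∈ submasks T, ∑ l ∈ submasks T,
          (∑ k ∈ submasks T with (i ||| l) &&& k = i ||| l, sgn R k) *
            (sgn R i * F i * (sgn R l * G l)) := by
        rw [sum_comm]
        refine sum_congr rfl fun i _ => ?_
        rw [sum_comm]
        refine sum_congr rfl fun l _ => ?_
        rw [sum_filter, sum_mul]
        exact sum_congr rfl fun k _ => by split_ifs <;> simp
    _ = _ := by
        simp only [sum_filter_submasks_sgn, mul_sum]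
        refine sum_congr rfl fun i _ => sum_congr rfl fun l _ => ?_
        split_ifs <;> simp

theorem coeff_shiftS (k n : ℕ) (f : PowerSeries R) : coeff n (shiftS k f) = coeff (k + n) f :=
  coeff_mk _ _

theorem coeff_bmtInv (f : PowerSeries R) (n : ℕ) :
    coeff n (bmtInv f) = sgn R n * ∑ i ∈ submasks n, sgn R i * coeff i f := by
  rw [bmtInv, coeff_mk, submasks, sum_filter, mul_sum]
  refine sum_congr rfl fun i hi => ?_
  have hin := Nat.lt_succ_iff.mp (mem_range.mp hi)
  by_cases h : i &&& n = i
  · rw [if_pos ((Nat.sub_and_eq_zero_iff hin).mpr h), if_pos h, sgn_sub_of_and_eq h]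
    ring
  · rw [if_neg (mt (Nat.sub_and_eq_zero_iff hin).mp h), if_neg h, mul_zero]

end

theorem ldiff_sub_eq_or_xor {a b j m : ℕ} (hj : j &&& (a &&& b) = j) (hle : a ||| b ≤ m)
    (ht : (m - (a ||| b)) &&& j = m - (a ||| b)) : (m - j).ldiff j = (a ||| b) ^^^ j := by
  have hja : j &&& (a ||| b) = j := by
    simp only [Nat.eq_iff_testBit_eq, Nat.testBit_and, Nat.testBit_or] at *
    grind
  have hdisj : ((a ||| b) ^^^ j) &&& (m - (a ||| b)) = 0 := by
    simp only [Nat.eq_iff_testBit_eq, Nat.testBit_and, Nat.testBit_or, Nat.testBit_xor,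
      Nat.zero_testBit] at *
    grind
  have hmj : m - j = ((a ||| b) ^^^ j) ||| (m - (a ||| b)) := by
    have := Nat.sub_eq_xor_of_and_eq hja
    have := Nat.le_of_and_eq hja
    rw [← Nat.add_eq_or_of_and_eq_zero hdisj]
    omega
  rw [hmj]
  simp only [Nat.eq_iff_testBit_eq, Nat.testBit_and, Nat.testBit_or, Nat.testBit_xor,
    Nat.testBit_ldiff] at *
  grind

theorem and_and_eq_of_sub_or_sub_eq_ldiff {a b j m : ℕ} (hja : j ≤ a) (hjb : j ≤ b)
    (hjm : j ≤ m) (h : (a - j) ||| (b - j) = (m - j).ldiff j) :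
    j &&& (a &&& b) = j ∧ a ||| b ≤ m ∧ (m - (a ||| b)) &&& j = m - (a ||| b) := by
  have hdisj : ∀ c, c ||| (m - j).ldiff j = (m - j).ldiff j → c &&& j = 0 := by
    intro c hc
    simp only [Nat.eq_iff_testBit_eq, Nat.testBit_and, Nat.testBit_or, Nat.testBit_ldiff,
      Nat.zero_testBit] at *
    grind
  have ha : a = (a - j) ||| j := by
    rw [← Nat.add_eq_or_of_and_eq_zero (hdisj _ (by rw [← h, ← Nat.or_assoc, Nat.or_self]))]
    omega
  have hb : b = (b - j) ||| j := by
    rw [← Nat.add_eq_or_of_and_eq_zero (hdisj _ (by rw [← h, Nat.or_left_comm, Nat.or_self]))]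
    omega
  have hab : a ||| b = (m - j).ldiff j + j := by
    rw [Nat.add_eq_or_of_and_eq_zero (hdisj _ (Nat.or_self _)), ← h]
    conv_lhs => rw [ha, hb]
    simp only [Nat.eq_iff_testBit_eq, Nat.testBit_or]
    grind
  have hmj : m - j = (m - j).ldiff j + ((m - j) &&& j) := by
    rw [Nat.add_eq_or_of_and_eq_zero]
    all_goals simp only [Nat.eq_iff_testBit_eq, Nat.testBit_and, Nat.testBit_or,
      Nat.testBit_ldiff, Nat.zero_testBit]
    all_goals grind
  have hrest : m - (a ||| b) = (m - j) &&& j := by omega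
  refine ⟨?_, by omega, ?_⟩
  · rw [ha, hb]
    simp only [Nat.eq_iff_testBit_eq, Nat.testBit_and, Nat.testBit_or]
    grind
  · rw [hrest, Nat.and_assoc, Nat.and_self]

/-- The coefficient of `f[a] * g[b]` in the `j`-th summand, see `sum_range_coeff_bmtInv_shiftS`. -/
noncomputable def convolutionWeight (R : Type*) [CommRing R] (m a b j : ℕ) : R :=
  if j &&& (a &&& b) = j ∧ a ||| b ≤ m ∧ (m - (a ||| b)) &&& j = m - (a ||| b) then
    sgn R (a ||| b) * sgn R a * sgn R b * sgn R j
  else 0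

section

variable {R : Type*} [CommRing R]

theorem convolutionWeight_eq {m a b j : ℕ} (hjm : j ≤ m) :
    convolutionWeight R m a b j =
      if j ≤ a ∧ j ≤ b ∧ (a - j) ||| (b - j) = (m - j).ldiff j then
        sgn R ((m - j).ldiff j) * sgn R (a - j) * sgn R (b - j)
      else 0 := by
  rw [convolutionWeight]
  by_cases hP : j &&& (a &&& b) = j ∧ a ||| b ≤ m ∧ (m - (a ||| b)) &&& j = m - (a ||| b)
  · obtain ⟨hj, hle, ht⟩ := hP
    have hja : j &&& a = j := by
      simp only [Nat.eq_iff_testBit_eq, Nat.testBit_and] at *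
      grind
    have hjb : j &&& b = j := by
      simp only [Nat.eq_iff_testBit_eq, Nat.testBit_and] at *
      grind
    have hT := ldiff_sub_eq_or_xor hj hle ht
    have hor : (a ^^^ j) ||| (b ^^^ j) = (a ||| b) ^^^ j := by
      simp only [Nat.eq_iff_testBit_eq, Nat.testBit_and, Nat.testBit_or, Nat.testBit_xor] at *
      grind
    rw [if_pos ⟨hj, hle, ht⟩, if_pos ⟨Nat.le_of_and_eq hja, Nat.le_of_and_eq hjb, by
      rw [Nat.sub_eq_xor_of_and_eq hja, Nat.sub_eq_xor_of_and_eq hjb, hor, hT]⟩, hT,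
      Nat.sub_eq_xor_of_and_eq hja, Nat.sub_eq_xor_of_and_eq hjb, sgn_xor, sgn_xor, sgn_xor]
    linear_combination -(sgn R (a ||| b) * sgn R a * sgn R b * sgn R j) * sgn_mul_self (R := R) j
  · rw [if_neg hP,
      if_neg fun ⟨hja, hjb, h⟩ => hP (and_and_eq_of_sub_or_sub_eq_ldiff hja hjb hjm h)]

theorem sum_convolutionWeight (m a b : ℕ) :
    ∑ j ∈ range (m + 1), convolutionWeight R m a b j = if a + b = m then 1 else 0 := by
  have hadd := Nat.add_eq_or_add_and a b
  by_cases hle : a ||| b ≤ m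
  · have hfilter : (range (m + 1)).filter (fun j => j &&& (a &&& b) = j ∧ a ||| b ≤ m ∧
        (m - (a ||| b)) &&& j = m - (a ||| b)) =
        (submasks (a &&& b)).filter (fun j => (m - (a ||| b)) &&& j = m - (a ||| b)) := by
      ext j
      simp only [mem_filter, mem_range, mem_submasks, hle, true_and]
      constructor
      · exact fun h => h.2
      · refine fun h => ⟨?_, h⟩
        have hab : (a &&& b) &&& (a ||| b) = a &&& b := by
          simp only [Nat.eq_iff_testBit_eq, Nat.testBit_and, Nat.testBit_or]
          grind
        have := Nat.le_of_and_eq h.1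
        have := Nat.le_of_and_eq hab
        omega
    have hsgn : sgn R a * sgn R b = sgn R (a ||| b) * sgn R (a &&& b) := by
      rw [← sgn_xor, ← sgn_xor]
      congr 1
      simp only [Nat.eq_iff_testBit_eq, Nat.testBit_and, Nat.testBit_or, Nat.testBit_xor]
      grind
    simp only [convolutionWeight]
    rw [← sum_filter, hfilter, ← mul_sum, sum_filter_submasks_sgn]
    by_cases hm : a + b = m
    · rw [if_pos (by omega), if_pos hm]
      linear_combination sgn R (a ||| b) * sgn R (a &&& b) * hsgn +
        sgn R (a &&& b) * sgn R (a &&& b) * sgn_mul_self (R := R) (a ||| b) +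
        sgn_mul_self (R := R) (a &&& b)
    · rw [if_neg (by omega), if_neg hm, mul_zero]
  · rw [if_neg (by omega)]
    exact sum_eq_zero fun j _ => if_neg fun h => hle h.2.1

theorem sum_submasks_ldiff_eq_sum_convolutionWeight (F G : ℕ → R) {j m : ℕ} (hjm : j ≤ m) :
    sgn R ((m - j).ldiff j) *
        ∑ i ∈ submasks ((m - j).ldiff j), ∑ l ∈ submasks ((m - j).ldiff j),
          (if i ||| l = (m - j).ldiff j then sgn R i * F (j + i) * (sgn R l * G (j + l)) else 0) =
      ∑ a ∈ range (m + 1), ∑ b ∈ range (m + 1),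
        convolutionWeight R m a b j * (F a * G b) := by
  have hT : (m - j).ldiff j ≤ m - j := Nat.le_of_and_eq <| by
    simp only [Nat.eq_iff_testBit_eq, Nat.testBit_and, Nat.testBit_ldiff]
    grind
  have hsub : ∀ i l, i ||| l = (m - j).ldiff j → i &&& (m - j).ldiff j = i ∧
      l &&& (m - j).ldiff j = l := by
    intro i l h
    rw [← h]
    simp only [Nat.eq_iff_testBit_eq, Nat.testBit_and, Nat.testBit_or]
    grind
  rw [sum_submasks_eq_sum_range_sub hjm hT _ fun i hi =>
    sum_eq_zero fun l _ => if_neg fun h => hi (hsub i l h).1]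
  simp_rw [sum_submasks_eq_sum_range_sub hjm hT _ fun l hl => if_neg fun h => hl (hsub _ l h).2]
  rw [mul_sum]
  refine sum_congr rfl fun a _ => ?_
  by_cases hja : j ≤ a
  · rw [if_pos hja, mul_sum]
    refine sum_congr rfl fun b _ => ?_
    by_cases hjb : j ≤ b
    · rw [if_pos hjb, convolutionWeight_eq hjm]
      simp only [hja, hjb, true_and, Nat.add_sub_cancel' hja, Nat.add_sub_cancel' hjb]
      split_ifs <;> ring
    · simp [convolutionWeight_eq hjm, hjb]
  · simp [convolutionWeight_eq hjm, hja]

theorem sum_range_ite_eq_sum_submasks_ldiff (n j : ℕ) (X Y : ℕ → R) :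
    ∑ k ∈ range (n + 1), (if (n - k) &&& k = 0 then (1 : R) else 0) * sgn R k *
        (if j &&& k = 0 then (1 : R) else 0) * X k * Y k =
      ∑ k ∈ submasks (n.ldiff j), sgn R k * (X k * Y k) := by
  have hT : n.ldiff j ≤ n := Nat.le_of_and_eq <| by
    simp only [Nat.eq_iff_testBit_eq, Nat.testBit_and, Nat.testBit_ldiff]
    grind
  rw [submasks_eq_filter_range hT, sum_filter]
  refine sum_congr rfl fun k hk => ?_
  have hkn := Nat.lt_succ_iff.mp (mem_range.mp hk)
  have hiff : ((n - k) &&& k = 0 ∧ j &&& k = 0) ↔ k &&& n.ldiff j = k := by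
    rw [Nat.sub_and_eq_zero_iff hkn]
    simp only [Nat.eq_iff_testBit_eq, Nat.testBit_and, Nat.testBit_ldiff, Nat.zero_testBit]
    grind
  simp only [← hiff, ite_and]
  split_ifs <;> ring

theorem sum_range_coeff_bmtInv_shiftS (f g : PowerSeries R) {j m : ℕ} (hjm : j ≤ m) :
    ∑ k ∈ range (m - j + 1), (if (m - j - k) &&& k = 0 then (1 : R) else 0) * sgn R k *
        (if j &&& k = 0 then (1 : R) else 0) * coeff k (bmtInv (shiftS j f)) *
        coeff k (bmtInv (shiftS j g)) =
      ∑ a ∈ range (m + 1), ∑ b ∈ range (m + 1),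
        convolutionWeight R m a b j * (coeff a f * coeff b g) := by
  rw [sum_range_ite_eq_sum_submasks_ldiff, ← sum_submasks_ldiff_eq_sum_convolutionWeight _ _ hjm,
    ← sum_submasks_sgn_mul_mul]
  refine sum_congr rfl fun k _ => ?_
  simp only [coeff_bmtInv, coeff_shiftS]
  linear_combination (sgn R k * (∑ i ∈ submasks k, sgn R i * coeff (j + i) f) *
    ∑ l ∈ submasks k, sgn R l * coeff (j + l) g) * sgn_mul_self (R := R) k

end

/-- For power series f, g and every m,
(f * g)[m] = Σ_{j=0}^{m} Σ_{k=0}^{m-j} T(m-j,k) * σ k * δ j [k] * f_j*[k] * g_j*[k],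
where T(n,k) = 1 if (n-k) AND k = 0 and 0 otherwise, and δ j [k] = 1 if j AND k = 0
and 0 otherwise. -/
theorem convolution_double_sum (R : Type*) [CommRing R] (f g : PowerSeries R) (m : ℕ) :
    PowerSeries.coeff m (f * g) =
      ∑ j ∈ Finset.range (m + 1), ∑ k ∈ Finset.range (m - j + 1),
        (if (m - j - k) &&& k = 0 then (1 : R) else 0) * sgn R k *
          (if j &&& k = 0 then (1 : R) else 0) *
          PowerSeries.coeff k (bmtInv (shiftS j f)) *
          PowerSeries.coeff k (bmtInv (shiftS j g)) := by
  rw [coeff_mul, Nat.sum_antidiagonal_eq_sum_range_succ_mk]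
  calc ∑ a ∈ range (m + 1), coeff a f * coeff (m - a) g
      = ∑ a ∈ range (m + 1), ∑ b ∈ range (m + 1),
          (if a + b = m then 1 else 0) * (coeff a f * coeff b g) := by
        refine sum_congr rfl fun a ha => ?_
        have ham := Nat.lt_succ_iff.mp (mem_range.mp ha)
        rw [sum_eq_single_of_mem (m - a) (mem_range.mpr (by omega)) fun b _ hb => by
          rw [if_neg (by omega), zero_mul], if_pos (by omega), one_mul]
    _ = ∑ j ∈ range (m + 1), ∑ a ∈ range (m + 1), ∑ b ∈ range (m + 1),
          convolutionWeight R m a b j * (coeff a f * coeff b g) := by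
        simp only [← sum_convolutionWeight, sum_mul]
        exact (sum_congr rfl fun a _ => sum_comm).trans sum_comm
    _ = _ := sum_congr rfl fun j hj =>
        (sum_range_coeff_bmtInv_shiftS f g (Nat.lt_succ_iff.mp (mem_range.mp hj))).symm
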